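/- There exists a C¹ function b : ℝ → ℝ and a probability density φ on ℝ with ∫_ℝ b'(x)² φ(x) dx < ∞ but ∫_ℝ (sup_{s∈[−|x|,|x|]} |b'(s)|)² φ(x) dx = ∞. In particular this holds with φ(x) proportional to (1+x²)^{−1} and b' supported on the intervals [n, n + 1/n²] (n ≥ 1) with |b'| ≤ n there and |b'| = n on a subinterval of positive measure. -/

import Mathlib

/-!
`b` is the primitive of a train of trapezoidal spikes, the `n`-th of height `n` on
`[n, n + 1/n²]`. Since `b'(x) ≤ |x|` and the spikes have total width `∑ 1/n² < ∞`, the function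
`b'² φ` is bounded and supported on a set of finite measure. But every `x ≥ 1` lies beyond the
plateau of the spike of height `⌊x⌋ - 1 ≥ x - 2`, so the envelope is at least `x - 2`, and its
square times `φ ≍ x⁻²` stays above a positive constant on a half-line.
-/

open MeasureTheory Set

theorem continuous_tsum_of_eq_zero_of_le {E : Type*} [AddCommMonoid E] [TopologicalSpace E]
    [ContinuousAdd E] {f : ℕ → ℝ → E} (hf : ∀ n, Continuous (f n))
    (hzero : ∀ (n : ℕ) (x : ℝ), x ≤ n → f n x = 0) : Continuous fun x => ∑' n, f n x := by
  refine continuous_iff_continuousAt.2 fun x => ?_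
  obtain ⟨N, hN⟩ := exists_nat_gt x
  refine (continuous_finsetSum (Finset.range N) fun n _ => hf n).continuousAt.congr ?_
  filter_upwards [Iio_mem_nhds hN] with y hy
  refine (tsum_eq_sum fun n hn => hzero n y ?_).symm
  have : N ≤ n := by simpa using hn
  exact (mem_Iio.1 hy).le.trans (by exact_mod_cast this)

theorem integrable_of_bounded_of_measure_support_ne_top {α : Type*} [MeasurableSpace α]
    {μ : Measure α} {f : α → ℝ} {M : ℝ} (hf : AEStronglyMeasurable f μ)
    (hM : ∀ x, ‖f x‖ ≤ M) (hsupp : μ (Function.support f) ≠ ⊤) : Integrable f μ :=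
  (integrableOn_iff_integrable_of_support_subset subset_rfl).1 <|
    Measure.integrableOn_of_bounded hsupp hf (ae_of_all _ hM)

theorem not_integrable_of_const_le_on_Ici {f : ℝ → ℝ} {ε a : ℝ} (hε : 0 < ε)
    (h : ∀ x, a ≤ x → ε ≤ f x) : ¬ Integrable f := by
  intro hf
  have hfin := (measure_mono (μ := volume) fun x (hx : x ∈ Ici a) => h x hx).trans_lt
    (hf.measure_ge_lt_top hε)
  simp at hfin

theorem one_div_natCast_sq_le_one (n : ℕ) : 1 / (n : ℝ) ^ 2 ≤ 1 := by
  rcases Nat.eq_zero_or_pos n with rfl | hn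
  · simp
  · exact div_le_one_of_le₀ (one_le_pow₀ (by exact_mod_cast hn)) (by positivity)

namespace EnvelopeCounterexample

noncomputable def trapezoid (t : ℝ) : ℝ := max 0 (min 1 (min (3 * t) (3 * (1 - t))))

theorem trapezoid_nonneg (t : ℝ) : 0 ≤ trapezoid t := le_max_left _ _

theorem trapezoid_le_one (t : ℝ) : trapezoid t ≤ 1 := max_le zero_le_one (min_le_left _ _)

theorem continuous_trapezoid : Continuous trapezoid := by unfold trapezoid; fun_prop

theorem trapezoid_eq_one {t : ℝ} (ht : t ∈ Icc (1 / 3 : ℝ) (2 / 3)) : trapezoid t = 1 := by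
  have : (1 : ℝ) ≤ min (3 * t) (3 * (1 - t)) := le_min (by linarith [ht.1]) (by linarith [ht.2])
  simp [trapezoid, min_eq_left this]

theorem support_trapezoid : Function.support trapezoid ⊆ Ioo 0 1 := by
  intro t ht
  by_contra hout
  have : min (3 * t) (3 * (1 - t)) ≤ 0 := by
    rcases not_and_or.1 hout with h | h
    · exact (min_le_left _ _).trans (by linarith [not_lt.1 h])
    · exact (min_le_right _ _).trans (by linarith [not_lt.1 h])
  exact ht (max_eq_left ((min_le_right _ _).trans this))

noncomputable def spike (n : ℕ) (x : ℝ) : ℝ := n * trapezoid (n ^ 2 * (x - n))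

theorem spike_nonneg (n : ℕ) (x : ℝ) : 0 ≤ spike n x :=
  mul_nonneg n.cast_nonneg (trapezoid_nonneg _)

theorem spike_le (n : ℕ) (x : ℝ) : spike n x ≤ n :=
  mul_le_of_le_one_right n.cast_nonneg (trapezoid_le_one _)

theorem continuous_spike (n : ℕ) : Continuous (spike n) := by
  unfold spike
  exact continuous_const.mul (continuous_trapezoid.comp (by fun_prop))

theorem support_spike (n : ℕ) : Function.support (spike n) ⊆ Ioo n (n + 1 / n ^ 2) := by
  intro x hx
  obtain ⟨hn, ht⟩ := mul_ne_zero_iff.1 hx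
  obtain ⟨h0, h1⟩ := support_trapezoid ht
  have hn2 : (0 : ℝ) < n ^ 2 := by positivity
  refine ⟨by nlinarith, ?_⟩
  rw [← sub_lt_iff_lt_add', lt_div_iff₀ hn2]
  linarith

theorem support_spike_subset_Ioo_add_one (n : ℕ) :
    Function.support (spike n) ⊆ Ioo n (n + 1) :=
  (support_spike n).trans (Ioo_subset_Ioo_right (by linarith [one_div_natCast_sq_le_one n]))

def plateau (n : ℕ) : Set ℝ := Icc (n + 1 / (3 * n ^ 2)) (n + 2 / (3 * n ^ 2))

theorem plateau_subset (n : ℕ) : plateau n ⊆ Icc n (n + 1 / n ^ 2) := by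
  refine Icc_subset_Icc (le_add_of_nonneg_right (by positivity)) ?_
  have : 2 / (3 * (n : ℝ) ^ 2) = 2 / 3 * (1 / n ^ 2) := by field_simp
  rw [this]
  linarith [show (0 : ℝ) ≤ 1 / n ^ 2 by positivity]

theorem volume_plateau_pos {n : ℕ} (hn : 0 < n) : 0 < volume (plateau n) := by
  have : (0 : ℝ) < 3 * n ^ 2 := by positivity
  rw [plateau, Real.volume_Icc, ENNReal.ofReal_pos]
  linarith [div_lt_div_of_pos_right (one_lt_two (α := ℝ)) this]

theorem spike_eq_of_mem_plateau {n : ℕ} {x : ℝ} (hx : x ∈ plateau n) : spike n x = n := by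
  rcases Nat.eq_zero_or_pos n with rfl | hn
  · simp [spike]
  have h3n : (0 : ℝ) < 3 * n ^ 2 := by positivity
  obtain ⟨h1, h2⟩ := hx
  rw [← le_sub_iff_add_le', div_le_iff₀ h3n] at h1
  rw [← sub_le_iff_le_add', le_div_iff₀ h3n] at h2
  rw [spike, trapezoid_eq_one ⟨by linarith, by linarith⟩, mul_one]

noncomputable def spikes (x : ℝ) : ℝ := ∑' n : ℕ, spike n x

theorem spikes_nonneg (x : ℝ) : 0 ≤ spikes x := tsum_nonneg fun n => spike_nonneg n x

theorem continuous_spikes : Continuous spikes :=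
  continuous_tsum_of_eq_zero_of_le continuous_spike fun n _ hx =>
    Function.notMem_support.1 fun h => (not_lt.2 hx) (support_spike n h).1

theorem spikes_eq_spike {k : ℕ} {x : ℝ} (hx : x ∈ Icc (k : ℝ) (k + 1)) :
    spikes x = spike k x := by
  refine tsum_eq_single k fun n hnk => Function.notMem_support.1 fun h => hnk ?_
  obtain ⟨h1, h2⟩ := support_spike_subset_Ioo_add_one n h
  have : n < k + 1 := by exact_mod_cast h1.trans_le hx.2
  have : k < n + 1 := by exact_mod_cast hx.1.trans_lt h2
  omega

theorem spikes_le_of_mem_Icc {n : ℕ} {x : ℝ} (hx : x ∈ Icc (n : ℝ) (n + 1)) : spikes x ≤ n :=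
  spikes_eq_spike hx ▸ spike_le n x

theorem spikes_eq_of_mem_plateau {n : ℕ} {x : ℝ} (hx : x ∈ plateau n) : spikes x = n := by
  have hx' := plateau_subset n hx
  rw [spikes_eq_spike (Icc_subset_Icc_right (by linarith [one_div_natCast_sq_le_one n]) hx'),
    spike_eq_of_mem_plateau hx]

theorem exists_of_spikes_ne_zero {x : ℝ} (hx : spikes x ≠ 0) :
    ∃ n : ℕ, 1 ≤ n ∧ x ∈ Ioo (n : ℝ) (n + 1 / n ^ 2) := by
  obtain ⟨n, hn⟩ : ∃ n, spike n x ≠ 0 := by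
    by_contra! h
    simp [spikes, h] at hx
  have hmem := support_spike n hn
  rcases Nat.eq_zero_or_pos n with rfl | hpos
  · simp at hmem
  · exact ⟨n, hpos, hmem⟩

theorem support_spikes_subset :
    Function.support spikes ⊆ ⋃ n : ℕ, Ioo (n : ℝ) (n + 1 / n ^ 2) := fun _ hx =>
  let ⟨n, _, hn⟩ := exists_of_spikes_ne_zero hx
  mem_iUnion.2 ⟨n, hn⟩

theorem volume_iUnion_Ioo_ne_top : volume (⋃ n : ℕ, Ioo (n : ℝ) (n + 1 / n ^ 2)) ≠ ⊤ := by
  refine ((measure_iUnion_le _).trans_lt ?_).ne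
  simp only [Real.volume_Ioo, add_sub_cancel_left]
  rw [← ENNReal.ofReal_tsum_of_nonneg (fun n => by positivity)
    (Real.summable_one_div_nat_pow.2 one_lt_two)]
  exact ENNReal.ofReal_lt_top

theorem spikes_le_abs (x : ℝ) : spikes x ≤ |x| := by
  by_cases hx : spikes x = 0
  · exact hx ▸ abs_nonneg x
  obtain ⟨n, -, h1, h2⟩ := exists_of_spikes_ne_zero hx
  have h2' : x ≤ n + 1 := by linarith [one_div_natCast_sq_le_one n]
  exact (spikes_le_of_mem_Icc ⟨h1.le, h2'⟩).trans (h1.le.trans (le_abs_self x))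

theorem integrable_spikes_sq_mul (c : ℝ) :
    Integrable fun x => spikes x ^ 2 * (c * (1 + x ^ 2)⁻¹) := by
  refine integrable_of_bounded_of_measure_support_ne_top (M := |c|)
    (by have := continuous_spikes; fun_prop) (fun x => ?_) ?_
  · have hx : spikes x ^ 2 ≤ 1 + x ^ 2 := by
      nlinarith [sq_le_sq' (by linarith [spikes_nonneg x, abs_nonneg x]) (spikes_le_abs x),
        sq_abs x]
    have hpos : (0 : ℝ) < 1 + x ^ 2 := by positivity
    rw [Real.norm_eq_abs, abs_mul, abs_mul, abs_of_nonneg (sq_nonneg _), abs_inv,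
      abs_of_pos hpos]
    calc spikes x ^ 2 * (|c| * (1 + x ^ 2)⁻¹) ≤ (1 + x ^ 2) * (|c| * (1 + x ^ 2)⁻¹) := by
          gcongr
      _ = |c| := by field_simp
  · refine ne_top_of_le_ne_top volume_iUnion_Ioo_ne_top (measure_mono ?_)
    have : Function.support (fun x => spikes x ^ 2 * (c * (1 + x ^ 2)⁻¹)) ⊆
        Function.support spikes := fun x hx h => hx (by simp [h])
    exact this.trans support_spikes_subset

noncomputable def envelope (f : ℝ → ℝ) (x : ℝ) : ℝ := ⨆ s : Icc (-|x|) |x|, |f s|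

theorem abs_le_envelope {f : ℝ → ℝ} (hf : Continuous f) {x s : ℝ} (hs : s ∈ Icc (-|x|) |x|) :
    |f s| ≤ envelope f x := by
  have hbdd := isCompact_Icc.bddAbove_image (hf.abs.continuousOn (s := Icc (-|x|) |x|))
  rw [image_eq_range] at hbdd
  exact le_ciSup (f := fun s : Icc (-|x|) |x| => |f s|) hbdd ⟨s, hs⟩

theorem sub_two_le_envelope_spikes {x : ℝ} (hx : 1 ≤ x) : x - 2 ≤ envelope spikes x := by
  obtain ⟨n, hn⟩ : ∃ n : ℕ, ⌊x⌋₊ = n + 1 :=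
    Nat.exists_eq_add_one.2 (Nat.floor_pos.2 hx)
  have hle := Nat.floor_le (by linarith : 0 ≤ x)
  have hlt := Nat.lt_floor_add_one x
  rw [hn] at hle hlt
  push_cast at hle hlt
  have hp : (n : ℝ) + 1 / (3 * n ^ 2) ∈ plateau n := left_mem_Icc.2 (by gcongr; norm_num)
  have hpx := plateau_subset n hp
  have hmem : (n : ℝ) + 1 / (3 * n ^ 2) ∈ Icc (-|x|) |x| := by
    rw [abs_of_nonneg (by linarith)]
    constructor <;> linarith [hpx.1, hpx.2, one_div_natCast_sq_le_one n, n.cast_nonneg (α := ℝ)]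
  have := abs_le_envelope continuous_spikes hmem
  rw [spikes_eq_of_mem_plateau hp, abs_of_nonneg n.cast_nonneg] at this
  linarith

theorem not_integrable_envelope_spikes_sq_mul {c : ℝ} (hc : 0 < c) :
    ¬ Integrable fun x => envelope spikes x ^ 2 * (c * (1 + x ^ 2)⁻¹) := by
  refine not_integrable_of_const_le_on_Ici (ε := c / 8) (a := 4) (by positivity) fun x hx => ?_
  have hE := sub_two_le_envelope_spikes (by linarith : (1 : ℝ) ≤ x)
  have hsq : x ^ 2 / 4 ≤ envelope spikes x ^ 2 := by nlinarith
  have hpos : (0 : ℝ) < 1 + x ^ 2 := by positivity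
  rw [← mul_assoc, ← div_eq_mul_inv, le_div_iff₀ hpos]
  nlinarith [mul_le_mul_of_nonneg_left hsq hc.le, mul_nonneg hc.le (by nlinarith : 0 ≤ x ^ 2 - 1)]

noncomputable def primitive (x : ℝ) : ℝ := ∫ t in (0 : ℝ)..x, spikes t

theorem deriv_primitive : deriv primitive = spikes :=
  funext (continuous_spikes.deriv_integral spikes 0)

theorem contDiff_primitive : ContDiff ℝ 1 primitive :=
  contDiff_one_iff_deriv.2 ⟨fun x => (continuous_spikes.integral_hasStrictDerivAt 0 x)
    |>.hasDerivAt.differentiableAt, deriv_primitive ▸ continuous_spikes⟩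

end EnvelopeCounterexample

open Real EnvelopeCounterexample in
/-- There is a C¹ function `b` and a probability density `φ` (which can
be taken proportional to `(1+x²)⁻¹`, with `b'` supported on the intervals
`[n, n+1/n²]`, `|b'| ≤ n` there and `|b'| = n` on a subinterval of positive measure)
such that `∫ b'² φ < ∞` but the envelope `sup_{s∈[-|x|,|x|]}|b'(s)|` is not
square-integrable against `φ`. -/
theorem stmt18 :
    ∃ (b : ℝ → ℝ) (c : ℝ), 0 < c ∧ ContDiff ℝ 1 b ∧
      (let φ : ℝ → ℝ := fun x => c * (1 + x ^ 2)⁻¹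
       (∀ x, 0 ≤ φ x) ∧ (∫ x, φ x = 1) ∧
       -- b' is supported on the intervals [n, n + 1/n²], n ≥ 1
       (∀ x : ℝ, deriv b x ≠ 0 →
          ∃ n : ℕ, 1 ≤ n ∧ x ∈ Set.Icc (n : ℝ) ((n : ℝ) + 1 / (n : ℝ) ^ 2)) ∧
       -- |b'| ≤ n on [n, n + 1/n²]
       (∀ n : ℕ, 1 ≤ n → ∀ x ∈ Set.Icc (n : ℝ) ((n : ℝ) + 1 / (n : ℝ) ^ 2),
          |deriv b x| ≤ (n : ℝ)) ∧
       -- |b'| = n on a subinterval of positive measure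
       (∀ n : ℕ, 1 ≤ n →
          0 < volume {x : ℝ |
            x ∈ Set.Icc (n : ℝ) ((n : ℝ) + 1 / (n : ℝ) ^ 2) ∧ |deriv b x| = (n : ℝ)}) ∧
       Integrable (fun x => (deriv b x) ^ 2 * φ x) ∧
       ¬ Integrable (fun x =>
          (⨆ s : Set.Icc (-|x|) |x|, |deriv b (s : ℝ)|) ^ 2 * φ x)) := by
  refine ⟨primitive, π⁻¹, by positivity, contDiff_primitive, ?_⟩
  simp only [deriv_primitive]
  refine ⟨fun x => by positivity, ?_, fun x hx => ?_, fun n _ x hx => ?_, fun n hn => ?_,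
    integrable_spikes_sq_mul π⁻¹, not_integrable_envelope_spikes_sq_mul (by positivity)⟩
  · rw [integral_const_mul, integral_univ_inv_one_add_sq, inv_mul_cancel₀ pi_ne_zero]
  · obtain ⟨n, hn, hxn⟩ := exists_of_spikes_ne_zero hx
    exact ⟨n, hn, Ioo_subset_Icc_self hxn⟩
  · rw [abs_of_nonneg (spikes_nonneg x)]
    exact spikes_le_of_mem_Icc (Icc_subset_Icc_right (by linarith [one_div_natCast_sq_le_one n]) hx)
  · refine (volume_plateau_pos hn).trans_le (measure_mono fun x hx => ⟨plateau_subset n hx, ?_⟩)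
    rw [spikes_eq_of_mem_plateau hx, abs_of_nonneg n.cast_nonneg]
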